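/- Let p ∈ ℕ, let A ∈ ℝ^{p×p}, and let (I_1,…,I_G) be a partition of {1,…,p} with |I_j| = p_j. For 1 ≤ i,j ≤ G write A_{ij} ∈ ℝ^{p_i×p_j} for the submatrix of A with rows indexed by I_i and columns indexed by I_j, and define the norm compression N(A) ∈ ℝ^{G×G} entrywise by (N(A))_{ij} := ‖A_{ij}‖, where ‖·‖ denotes the spectral (ℓ²→ℓ²) operator norm. Then ‖A‖ ≤ ‖N(A)‖ ≤ (Σ_{i,j=1}^{G} ‖A_{ij}‖²)^{1/2}. -/

import Mathlib

open scoped BigOperators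

/-- The spectral (`ℓ² → ℓ²` operator) norm of a real matrix. -/
noncomputable def specNorm {m n : Type*} [Fintype m] [Fintype n] [DecidableEq n]
    (A : Matrix m n ℝ) : ℝ :=
  ‖LinearMap.toContinuousLinearMap (Matrix.toEuclideanLin A)‖

/-- The `(i,j)` block of `A` with rows in the fiber `c ⁻¹ {i}` and columns in `c ⁻¹ {j}`. -/
noncomputable def blockOf {p G : ℕ} (A : Matrix (Fin p) (Fin p) ℝ) (c : Fin p → Fin G)
    (i j : Fin G) : Matrix {a : Fin p // c a = i} {b : Fin p // c b = j} ℝ :=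
  A.submatrix (fun x => (x : Fin p)) (fun y => (y : Fin p))

/-- The norm compression of `A` along the partition given by the fibers of `c`. -/
noncomputable def normCompression {p G : ℕ} (A : Matrix (Fin p) (Fin p) ℝ)
    (c : Fin p → Fin G) : Matrix (Fin G) (Fin G) ℝ :=
  Matrix.of fun i j => specNorm (blockOf A c i j)

/-- Auxiliary: the continuous linear map associated to a matrix. -/
noncomputable def specCLM {m n : Type*} [Fintype m] [Fintype n] [DecidableEq n]
    (A : Matrix m n ℝ) : EuclideanSpace ℝ n →L[ℝ] EuclideanSpace ℝ m :=
  LinearMap.toContinuousLinearMap (Matrix.toEuclideanLin A)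

lemma specNorm_eq_clm {m n : Type*} [Fintype m] [Fintype n] [DecidableEq n]
    (A : Matrix m n ℝ) : specNorm A = ‖specCLM A‖ := rfl

@[simp] lemma specCLM_apply {m n : Type*} [Fintype m] [Fintype n] [DecidableEq n]
    (A : Matrix m n ℝ) (x : EuclideanSpace ℝ n) (a : m) :
    specCLM A x a = ∑ b, A a b * x b := rfl

lemma norm_specCLM_apply_le {m n : Type*} [Fintype m] [Fintype n] [DecidableEq n]
    (A : Matrix m n ℝ) (x : EuclideanSpace ℝ n) :
    ‖specCLM A x‖ ≤ specNorm A * ‖x‖ :=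
  (specCLM A).le_opNorm x

/-- Restriction of a vector to a fiber. -/
noncomputable def restr {p G : ℕ} (c : Fin p → Fin G) (x : EuclideanSpace ℝ (Fin p))
    (j : Fin G) : EuclideanSpace ℝ {b : Fin p // c b = j} := WithLp.toLp 2 (fun b => x b)

@[simp] lemma restr_apply {p G : ℕ} (c : Fin p → Fin G) (x : EuclideanSpace ℝ (Fin p))
    (j : Fin G) (b : {b : Fin p // c b = j}) : restr c x j b = x b := rfl

lemma sum_norm_sq_restr {p G : ℕ} (c : Fin p → Fin G) (x : EuclideanSpace ℝ (Fin p)) :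
    ∑ j, ‖restr c x j‖ ^ 2 = ‖x‖ ^ 2 := by
  have h1 : ∀ j : Fin G, ‖restr c x j‖ ^ 2 = ∑ b : {b : Fin p // c b = j}, (x b) ^ 2 := by
    intro j
    rw [EuclideanSpace.norm_eq, Real.sq_sqrt (by positivity)]
    simp [Real.norm_eq_abs, sq_abs]
  simp_rw [h1]
  rw [Fintype.sum_fiberwise c (fun b => (x b) ^ 2)]
  rw [EuclideanSpace.norm_eq, Real.sq_sqrt (by positivity)]
  simp [Real.norm_eq_abs, sq_abs]

lemma norm_restr_vec {p G : ℕ} (c : Fin p → Fin G) (x : EuclideanSpace ℝ (Fin p))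
    (ξ : EuclideanSpace ℝ (Fin G)) (h : ∀ j, ξ j = ‖restr c x j‖) : ‖ξ‖ = ‖x‖ := by
  rw [EuclideanSpace.norm_eq]
  simp_rw [h]
  simp_rw [Real.norm_eq_abs, sq_abs]
  rw [sum_norm_sq_restr, Real.sqrt_sq (norm_nonneg x)]

lemma inner_decomp {p G : ℕ} (A : Matrix (Fin p) (Fin p) ℝ) (c : Fin p → Fin G)
    (x y : EuclideanSpace ℝ (Fin p)) :
    (inner ℝ y (specCLM A x) : ℝ) =
      ∑ i, ∑ j, (inner ℝ (restr c y i) (specCLM (blockOf A c i j) (restr c x j)) : ℝ) := by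
  simp only [PiLp.inner_apply, RCLike.inner_apply, conj_trivial, specCLM_apply, restr_apply,
    blockOf, Matrix.submatrix_apply]
  simp_rw [mul_comm _ (y.ofLp _)]
  rw [← Fintype.sum_fiberwise c (fun a => y a * ∑ b, A a b * x b)]
  refine Finset.sum_congr rfl fun i _ => ?_
  calc ∑ a : {a : Fin p // c a = i}, y a * ∑ b, A (a : Fin p) b * x b
      = ∑ a : {a : Fin p // c a = i}, ∑ j,
          y a * ∑ b : {b : Fin p // c b = j}, A (a : Fin p) (b : Fin p) * x b := by
        refine Finset.sum_congr rfl fun a _ => ?_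
        rw [← Finset.mul_sum, Fintype.sum_fiberwise c (fun b => A (a : Fin p) b * x b)]
    _ = _ := Finset.sum_comm

lemma inner_le_compression {p G : ℕ} (A : Matrix (Fin p) (Fin p) ℝ) (c : Fin p → Fin G)
    (x y : EuclideanSpace ℝ (Fin p)) :
    (inner ℝ y (specCLM A x) : ℝ) ≤ specNorm (normCompression A c) * ‖y‖ * ‖x‖ := by
  set N := normCompression A c with hN
  set ξ : EuclideanSpace ℝ (Fin G) := WithLp.toLp 2 (fun j => ‖restr c x j‖) with hξdef
  set η : EuclideanSpace ℝ (Fin G) := WithLp.toLp 2 (fun i => ‖restr c y i‖) with hηdef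
  have hξ : ‖ξ‖ = ‖x‖ := norm_restr_vec c x ξ fun j => rfl
  have hη : ‖η‖ = ‖y‖ := norm_restr_vec c y η fun i => rfl
  calc (inner ℝ y (specCLM A x) : ℝ)
      = ∑ i, ∑ j, (inner ℝ (restr c y i) (specCLM (blockOf A c i j) (restr c x j)) : ℝ) :=
        inner_decomp A c x y
    _ ≤ ∑ i, ∑ j, N i j * (η i * ξ j) := by
        refine Finset.sum_le_sum fun i _ => Finset.sum_le_sum fun j _ => ?_
        calc (inner ℝ (restr c y i) (specCLM (blockOf A c i j) (restr c x j)) : ℝ)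
            ≤ ‖restr c y i‖ * ‖specCLM (blockOf A c i j) (restr c x j)‖ :=
              real_inner_le_norm _ _
          _ ≤ ‖restr c y i‖ * (specNorm (blockOf A c i j) * ‖restr c x j‖) := by
              have := norm_specCLM_apply_le (blockOf A c i j) (restr c x j)
              exact mul_le_mul_of_nonneg_left this (norm_nonneg _)
          _ = N i j * (η i * ξ j) := by
              simp only [hN, normCompression, Matrix.of_apply, hξdef, hηdef, WithLp.ofLp_toLp]; ring
    _ = (inner ℝ η (specCLM N ξ) : ℝ) := by
        simp only [PiLp.inner_apply, RCLike.inner_apply, conj_trivial, specCLM_apply,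
          Finset.mul_sum, Finset.sum_mul]
        exact Finset.sum_congr rfl fun i _ => Finset.sum_congr rfl fun j _ => by ring
    _ ≤ ‖η‖ * ‖specCLM N ξ‖ := real_inner_le_norm _ _
    _ ≤ ‖η‖ * (specNorm N * ‖ξ‖) :=
        mul_le_mul_of_nonneg_left (norm_specCLM_apply_le N ξ) (norm_nonneg _)
    _ = specNorm N * ‖y‖ * ‖x‖ := by rw [hξ, hη]; ring

/-- Norm compression inequality: `‖A‖ ≤ ‖N(A)‖ ≤ (Σ_{i,j} ‖A_{ij}‖²)^{1/2}`,
where the blocks are indexed by a partition of `{1,…,p}` (the fibers of a surjection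
`c : Fin p → Fin G`). -/
theorem norm_compression_inequality (p G : ℕ) (A : Matrix (Fin p) (Fin p) ℝ)
    (c : Fin p → Fin G) (hc : Function.Surjective c) :
    specNorm A ≤ specNorm (normCompression A c) ∧
      specNorm (normCompression A c) ≤
        Real.sqrt (∑ i : Fin G, ∑ j : Fin G, (specNorm (blockOf A c i j)) ^ 2) := by
  constructor
  · rw [specNorm_eq_clm]
    refine ContinuousLinearMap.opNorm_le_bound _ (by rw [specNorm_eq_clm]; positivity)
      fun x => ?_
    have key := inner_le_compression A c x (specCLM A x)
    have h2 : ‖specCLM A x‖ ^ 2 ≤ specNorm (normCompression A c) * ‖specCLM A x‖ * ‖x‖ := by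
      rw [← real_inner_self_eq_norm_sq]
      exact key
    rcases eq_or_lt_of_le (norm_nonneg (specCLM A x)) with h | h
    · rw [← h]
      have : (0:ℝ) ≤ specNorm (normCompression A c) := by rw [specNorm_eq_clm]; positivity
      positivity
    · nlinarith [norm_nonneg x]
  · rw [specNorm_eq_clm]
    refine ContinuousLinearMap.opNorm_le_bound _ (Real.sqrt_nonneg _) fun x => ?_
    rw [EuclideanSpace.norm_eq, EuclideanSpace.norm_eq x, ← Real.sqrt_mul (by positivity)]
    apply Real.sqrt_le_sqrt
    simp_rw [Real.norm_eq_abs, sq_abs, specCLM_apply]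
    rw [Finset.sum_mul]
    refine Finset.sum_le_sum fun i _ => ?_
    calc (∑ j, normCompression A c i j * x j) ^ 2
        ≤ (∑ j, normCompression A c i j ^ 2) * ∑ j, x j ^ 2 :=
          Finset.sum_mul_sq_le_sq_mul_sq _ _ _
      _ = (∑ j, specNorm (blockOf A c i j) ^ 2) * ∑ j, x j ^ 2 := by
          simp [normCompression]
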